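/- Let 𝒜 = (Pᵀ ⊗ I_n)(A_1 ⊕ ⋯ ⊕ A_L) with P row-stochastic and A_ℓ nonnegative, and suppose αρ(𝒜) < 1 with α > 0. Given a positive vector v̄ ∈ ℝ^n and initial distribution ζ_0 ∈ ℝ^L with all entries positive, the vector v = (𝟙_Lᵀ ⊗ I_n)(I_{nL} - α𝒜)^{-1}(ζ_0 ⊗ 𝟙_n) satisfies v < v̄ entrywise if and only if there exist positive vectors λ_1, …, λ_L ∈ ℝ^n such that (ζ_0)_k·𝟙_n + α·∑_{ℓ=1}^L P_{ℓk}·A_ℓ·λ_ℓ < λ_k for every k ∈ [L], and ∑_{ℓ=1}^L λ_ℓ < v̄. -/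

import Mathlib

open Matrix

noncomputable def specRad {m : Type*} [Fintype m] [DecidableEq m]
    (A : Matrix m m ℝ) : ℝ :=
  (spectralRadius ℂ (A.map (algebraMap ℝ ℂ))).toReal

noncomputable def calA {n L : ℕ} (P : Matrix (Fin L) (Fin L) ℝ)
    (A : Fin L → Matrix (Fin n) (Fin n) ℝ) :
    Matrix (Fin L × Fin n) (Fin L × Fin n) ℝ :=
  (Matrix.kroneckerMap (· * ·) Pᵀ (1 : Matrix (Fin n) (Fin n) ℝ)) *
    ((Matrix.blockDiagonal fun ℓ => A ℓ).reindex
      (Equiv.prodComm (Fin n) (Fin L)) (Equiv.prodComm (Fin n) (Fin L)))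

open Filter Topology
open scoped ENNReal NNReal

/-! With `M = α𝒜`, entrywise nonnegative with `ρ(M) < 1`, Gelfand's formula makes the Neumann
series `∑ Mᵏ` converge, so `(1 - M)⁻¹ = ∑ Mᵏ` is entrywise nonnegative. Hence
`x = (1 - M)⁻¹ b`, `b = ζ₀ ⊗ 𝟙`, lies below every `λ` with `b + Mλ ≤ λ`, which bounds `∑ₗ xₗ`
by `∑ₗ λₗ`. Conversely `λ = (1 + ε) x` is strictly feasible since `b + Mλ = λ - ε b`, and a
small `ε` keeps `∑ₗ λₗ < v̄`. -/

theorem summable_norm_pow_of_spectralRadius_lt_one {A : Type*} [NormedRing A]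
    [NormedAlgebra ℂ A] [CompleteSpace A] {a : A} (h : spectralRadius ℂ a < 1) :
    Summable fun k => ‖a ^ k‖ := by
  obtain ⟨r, hρr, hr1⟩ := ENNReal.lt_iff_exists_nnreal_btwn.1 h
  refine Summable.of_norm_bounded_eventually_nat
    (summable_geometric_of_lt_one r.2 (by exact_mod_cast hr1)) ?_
  filter_upwards [(spectrum.pow_nnnorm_pow_one_div_tendsto_nhds_spectralRadius a)
    |>.eventually_lt_const hρr, eventually_ne_atTop 0] with k hk hk0
  rw [one_div, ENNReal.rpow_inv_lt_iff (by positivity), ENNReal.rpow_natCast] at hk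
  rw [norm_norm, ← coe_nnnorm]
  exact_mod_cast hk.le

theorem spectralRadius_smul {𝕜 A : Type*} [NormedField 𝕜] [Ring A] [Algebra 𝕜 A] {c : 𝕜}
    (hc : c ≠ 0) (a : A) :
    spectralRadius 𝕜 (c • a) = ‖c‖₊ * spectralRadius 𝕜 a := by
  rw [show c • a = (Units.mk0 c hc : 𝕜ˣ) • a from rfl, spectralRadius,
    spectrum.unit_smul_eq_smul, spectralRadius, ← Set.image_smul, iSup_image, ENNReal.mul_iSup]
  simp only [ENNReal.mul_iSup, Units.smul_def, Units.val_mk0, nnnorm_smul, ENNReal.coe_mul]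

namespace Matrix

section
attribute [local instance] Matrix.linftyOpSeminormedAddCommGroup

theorem norm_entry_le_linfty_opNorm {m n α : Type*} [Fintype m] [Fintype n] [SeminormedAddCommGroup α]
    (A : Matrix m n α) (i : m) (j : n) : ‖A i j‖ ≤ ‖A‖ := by
  rw [linfty_opNorm_def]
  calc ‖A i j‖ ≤ ∑ j', ‖A i j'‖ :=
        Finset.single_le_sum (fun _ _ => norm_nonneg _) (Finset.mem_univ j)
    _ = ((∑ j', ‖A i j'‖₊ : ℝ≥0) : ℝ) := by push_cast; rfl
    _ ≤ _ := NNReal.coe_le_coe.2 <|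
        Finset.le_sup (f := fun i => ∑ j', ‖A i j'‖₊) (Finset.mem_univ i)

end

theorem mulVec_nonneg {m n R : Type*} [Fintype n] [Semiring R] [PartialOrder R]
    [IsOrderedRing R] {M : Matrix m n R} (hM : ∀ i j, 0 ≤ M i j) {v : n → R} (hv : 0 ≤ v) :
    0 ≤ M *ᵥ v :=
  fun i => Finset.sum_nonneg fun j _ => mul_nonneg (hM i j) (hv j)

variable {m : Type*} [Fintype m] [DecidableEq m]

theorem summable_pow_of_spectralRadius_lt_one {M : Matrix m m ℝ}
    (h : spectralRadius ℂ (M.map (algebraMap ℝ ℂ)) < 1) : Summable (M ^ ·) := by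
  -- any submultiplicative norm will do: `spectralRadius` is purely algebraic
  let _ := Matrix.linftyOpNormedRing (n := m) (α := ℂ)
  let _ := Matrix.linftyOpNormedAlgebra (n := m) (R := ℂ) (α := ℂ)
  have : CompleteSpace (Matrix m m ℂ) := FiniteDimensional.complete ℂ _
  have hsum := summable_norm_pow_of_spectralRadius_lt_one h
  refine Pi.summable.2 fun i => Pi.summable.2 fun j => ?_
  refine Summable.of_norm_bounded hsum fun k => ?_
  have hk : (M ^ k).map (algebraMap ℝ ℂ) = M.map (algebraMap ℝ ℂ) ^ k := by
    rw [← RingHom.mapMatrix_apply, ← RingHom.mapMatrix_apply, map_pow]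
  calc ‖(M ^ k) i j‖ = ‖(M.map (algebraMap ℝ ℂ) ^ k) i j‖ := by
        rw [← hk, map_apply, Complex.coe_algebraMap, Complex.norm_real]
    _ ≤ ‖M.map (algebraMap ℝ ℂ) ^ k‖ := norm_entry_le_linfty_opNorm _ i j

theorem spectralRadius_lt_top (M : Matrix m m ℂ) : spectralRadius ℂ M < ⊤ := by
  let _ := Matrix.linftyOpNormedRing (n := m) (α := ℂ)
  let _ := Matrix.linftyOpNormedAlgebra (n := m) (R := ℂ) (α := ℂ)
  have : CompleteSpace (Matrix m m ℂ) := FiniteDimensional.complete ℂ _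
  refine (spectrum.spectralRadius_le_pow_nnnorm_pow_one_div ℂ M 0).trans_lt ?_
  simpa using ENNReal.mul_lt_top ENNReal.coe_lt_top ENNReal.coe_lt_top

theorem spectralRadius_map_smul_lt_one {M : Matrix m m ℝ} {α : ℝ} (hα : 0 < α)
    (h : α * specRad M < 1) : spectralRadius ℂ ((α • M).map (algebraMap ℝ ℂ)) < 1 := by
  have hmap : (α • M).map (algebraMap ℝ ℂ) = (α : ℂ) • M.map (algebraMap ℝ ℂ) :=
    Matrix.map_smul _ _ (fun x => by simp) M
  rw [hmap, spectralRadius_smul (by exact_mod_cast hα.ne'),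
    ← ENNReal.ofReal_toReal (spectralRadius_lt_top _).ne, ← enorm_eq_nnnorm, ← ofReal_norm,
    Complex.norm_real, Real.norm_of_nonneg hα.le, ← ENNReal.ofReal_mul hα.le]
  exact ENNReal.ofReal_lt_one.2 h

section NeumannSeries

variable {M : Matrix m m ℝ} (hS : Summable (M ^ ·))
include hS

theorem inv_one_sub_eq_tsum_pow : (1 - M)⁻¹ = ∑' k, M ^ k :=
  inv_eq_left_inv hS.tsum_pow_mul_one_sub

theorem one_sub_mul_inv_one_sub : (1 - M) * (1 - M)⁻¹ = 1 := by
  rw [inv_one_sub_eq_tsum_pow hS, hS.one_sub_mul_tsum_pow]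

theorem inv_one_sub_apply_nonneg (hM : ∀ i j, 0 ≤ M i j) (i j : m) :
    0 ≤ (1 - M)⁻¹ i j := by
  rw [inv_one_sub_eq_tsum_pow hS]
  exact (Pi.hasSum.1 (Pi.hasSum.1 hS.hasSum i) j).nonneg fun k => pow_apply_nonneg hM k i j

theorem inv_one_sub_mulVec_eq_add (b : m → ℝ) :
    (1 - M)⁻¹ *ᵥ b = b + M *ᵥ ((1 - M)⁻¹ *ᵥ b) := by
  have := congrArg (· *ᵥ b) (one_sub_mul_inv_one_sub hS)
  simp only [sub_mul, one_mul, sub_mulVec, ← mulVec_mulVec, one_mulVec] at this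
  exact sub_eq_iff_eq_add.1 this

theorem add_mulVec_smul_inv_one_sub_mulVec_lt {b : m → ℝ} (hb : ∀ i, 0 < b i) {ε : ℝ}
    (hε : 0 < ε) (i : m) :
    (b + M *ᵥ ((1 + ε) • (1 - M)⁻¹ *ᵥ b)) i < ((1 + ε) • (1 - M)⁻¹ *ᵥ b) i := by
  have hfix := congrFun (inv_one_sub_mulVec_eq_add hS b) i
  simp only [Pi.add_apply, mulVec_smul, Pi.smul_apply, smul_eq_mul] at hfix ⊢
  nlinarith [hb i]

variable (hM : ∀ i j, 0 ≤ M i j)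
include hM

theorem inv_one_sub_mulVec_le {b y : m → ℝ} (h : b + M *ᵥ y ≤ y) :
    (1 - M)⁻¹ *ᵥ b ≤ y := by
  have hy : (1 - M)⁻¹ *ᵥ ((1 - M) *ᵥ y) = y := by
    rw [mulVec_mulVec, inv_one_sub_eq_tsum_pow hS, hS.tsum_pow_mul_one_sub, one_mulVec]
  have hres : 0 ≤ (1 - M) *ᵥ y - b := by
    rw [sub_mulVec, one_mulVec]
    exact sub_nonneg.2 (le_sub_iff_add_le.2 h)
  have := mulVec_nonneg (inv_one_sub_apply_nonneg hS hM) hres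
  rwa [mulVec_sub, hy, sub_nonneg] at this

theorem inv_one_sub_mulVec_pos {b : m → ℝ} (hb : ∀ i, 0 < b i) (i : m) :
    0 < ((1 - M)⁻¹ *ᵥ b) i := by
  have hx := mulVec_nonneg (inv_one_sub_apply_nonneg hS hM) fun i => (hb i).le
  rw [inv_one_sub_mulVec_eq_add hS]
  exact add_pos_of_pos_of_nonneg (hb i) (mulVec_nonneg hM hx i)

end NeumannSeries

end Matrix

theorem exists_pos_forall_one_add_mul_lt {ι : Type*} [Finite ι] {s v : ι → ℝ}
    (h : ∀ i, s i < v i) : ∃ ε > 0, ∀ i, (1 + ε) * s i < v i := by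
  have hnhds : ∀ᶠ ε in 𝓝 (0 : ℝ), ∀ i, (1 + ε) * s i < v i :=
    eventually_all.2 fun i => Filter.Tendsto.eventually_lt_const (by simpa using h i)
      (((continuous_const.add continuous_id).mul continuous_const).tendsto 0)
  obtain ⟨ε, hεv, hε⟩ := ((hnhds.filter_mono nhdsWithin_le_nhds).and
    (self_mem_nhdsWithin : Set.Ioi (0 : ℝ) ∈ 𝓝[>] 0)).exists
  exact ⟨ε, hε, hεv⟩

theorem calA_apply {n L : ℕ} (P : Matrix (Fin L) (Fin L) ℝ)
    (A : Fin L → Matrix (Fin n) (Fin n) ℝ) (k ℓ : Fin L) (i j : Fin n) :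
    calA P A (k, i) (ℓ, j) = P ℓ k * A ℓ i j := by
  simp only [calA, Matrix.mul_apply, Fintype.sum_prod_type,
    Matrix.kroneckerMap_apply, Matrix.reindex_apply, Matrix.submatrix_apply,
    Equiv.prodComm_symm, Equiv.prodComm_apply, Prod.swap_prod_mk,
    Matrix.blockDiagonal_apply, Matrix.transpose_apply, Matrix.one_apply]
  simp [mul_ite, ite_mul, Finset.sum_ite_eq, eq_comm]

theorem calA_mulVec {n L : ℕ} (P : Matrix (Fin L) (Fin L) ℝ)
    (A : Fin L → Matrix (Fin n) (Fin n) ℝ) (y : Fin L × Fin n → ℝ) (k : Fin L) (i : Fin n) :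
    (calA P A *ᵥ y) (k, i) = ∑ ℓ, P ℓ k * (A ℓ *ᵥ Function.curry y ℓ) i := by
  simp only [Matrix.mulVec, dotProduct, Fintype.sum_prod_type, calA_apply, Finset.mul_sum,
    mul_assoc, Function.curry_apply]

theorem stmt12_general {n L : ℕ} (P : Matrix (Fin L) (Fin L) ℝ)
    (hP : ∀ ℓ k, 0 ≤ P ℓ k)
    (A : Fin L → Matrix (Fin n) (Fin n) ℝ) (hA : ∀ ℓ i j, 0 ≤ A ℓ i j)
    (ζ0 : Fin L → ℝ) (hζ0 : ∀ ℓ, 0 < ζ0 ℓ)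
    (α : ℝ) (hα : 0 < α) (hρ : α * specRad (calA P A) < 1)
    (vbar : Fin n → ℝ) :
    (∀ i : Fin n,
        (∑ ℓ : Fin L,
          ((1 - α • calA P A)⁻¹ *ᵥ fun p : Fin L × Fin n => ζ0 p.1) (ℓ, i))
          < vbar i) ↔
      ∃ lam : Fin L → Fin n → ℝ,
        (∀ ℓ i, 0 < lam ℓ i) ∧
        (∀ (k : Fin L) (i : Fin n),
          ζ0 k + α * ∑ ℓ, P ℓ k * (A ℓ *ᵥ lam ℓ) i < lam k i) ∧
        (∀ i, ∑ ℓ, lam ℓ i < vbar i) := by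
  set M := α • calA P A
  have hM : ∀ p q, 0 ≤ M p q := fun ⟨k, i⟩ ⟨ℓ, j⟩ =>
    mul_nonneg hα.le (by rw [calA_apply]; exact mul_nonneg (hP ℓ k) (hA ℓ i j))
  have hS : Summable (M ^ ·) := Matrix.summable_pow_of_spectralRadius_lt_one
    (Matrix.spectralRadius_map_smul_lt_one hα hρ)
  set b : Fin L × Fin n → ℝ := fun p => ζ0 p.1
  have hb : ∀ p, 0 < b p := fun p => hζ0 p.1
  have hfeasible : ∀ lam : Fin L → Fin n → ℝ,
      (∀ k i, ζ0 k + α * ∑ ℓ, P ℓ k * (A ℓ *ᵥ lam ℓ) i < lam k i) ↔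
        ∀ p, (b + M *ᵥ Function.uncurry lam) p < Function.uncurry lam p := by
    intro lam
    simp only [Prod.forall, Pi.add_apply, M, Matrix.smul_mulVec, Pi.smul_apply, calA_mulVec,
      smul_eq_mul, Function.curry_uncurry, Function.uncurry_apply_pair, b]
  constructor
  · intro hv
    obtain ⟨ε, hε, hεv⟩ := exists_pos_forall_one_add_mul_lt hv
    refine ⟨Function.curry ((1 + ε) • (1 - M)⁻¹ *ᵥ b),
      fun ℓ i => mul_pos (by linarith) (Matrix.inv_one_sub_mulVec_pos hS hM hb _),
      (hfeasible _).2 ?_, fun i => by simpa [Finset.mul_sum] using hεv i⟩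
    rw [Function.uncurry_curry]
    exact Matrix.add_mulVec_smul_inv_one_sub_mulVec_lt hS hb hε
  · rintro ⟨lam, -, hlam, hsum⟩ i
    have hle := Matrix.inv_one_sub_mulVec_le hS hM fun p => ((hfeasible lam).1 hlam p).le
    exact (Finset.sum_le_sum fun ℓ _ => hle (ℓ, i)).trans_lt (hsum i)

/-- LP characterization of the Katz centrality of Markovian temporal networks:
$v<\bar v$ iff there are positive vectors $\lambda_1,\dots,\lambda_L$ with
$(\zeta_0)_k\mathbf 1 + \alpha\sum_\ell P_{\ell k}A_\ell\lambda_\ell < \lambda_k$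
and $\sum_\ell\lambda_\ell<\bar v$. -/
theorem stmt12 {n L : ℕ} (P : Matrix (Fin L) (Fin L) ℝ)
    (hP : ∀ ℓ k, 0 ≤ P ℓ k) (hProw : ∀ ℓ, ∑ k, P ℓ k = 1)
    (A : Fin L → Matrix (Fin n) (Fin n) ℝ) (hA : ∀ ℓ i j, 0 ≤ A ℓ i j)
    (ζ0 : Fin L → ℝ) (hζ0 : ∀ ℓ, 0 < ζ0 ℓ) (hζ0sum : ∑ ℓ, ζ0 ℓ = 1)
    (α : ℝ) (hα : 0 < α) (hρ : α * specRad (calA P A) < 1)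
    (vbar : Fin n → ℝ) (hvbar : ∀ i, 0 < vbar i) :
    (∀ i : Fin n,
        (∑ ℓ : Fin L,
          ((1 - α • calA P A)⁻¹ *ᵥ fun p : Fin L × Fin n => ζ0 p.1) (ℓ, i))
          < vbar i) ↔
      ∃ lam : Fin L → Fin n → ℝ,
        (∀ ℓ i, 0 < lam ℓ i) ∧
        (∀ (k : Fin L) (i : Fin n),
          ζ0 k + α * ∑ ℓ, P ℓ k * (A ℓ *ᵥ lam ℓ) i < lam k i) ∧
        (∀ i, ∑ ℓ, lam ℓ i < vbar i) :=
  stmt12_general P hP A hA ζ0 hζ0 α hα hρ vbar
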